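/- Every Nash equilibrium outcome of the preference revelation game induced by the tiered deferred acceptance mechanism (under any tier structure) is individually rational and non-wasteful with respect to the true preferences. -/
import Mathlib


set_option linter.unusedSectionVars false

namespace SchoolChoice

/-- A strict preference over `S ∪ {self}`, encoded by an injective ranking function on
`Option S`; `none` denotes being unmatched (the student himself), and a smaller rank
means more preferred. Injective rankings on a finite set are exactly strict linear orders. -/
structure Pref (S : Type) where
  rank : Option S → ℕ
  inj : Function.Injective rank

/-- Quotas together with strict priorities of the schools: `prank s` ranks the students
at school `s`, a smaller rank meaning higher priority. -/
structure Prio (I S : Type) where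
  quota : S → ℕ
  prank : S → I → ℕ
  inj : ∀ s, Function.Injective (prank s)

variable {I S : Type} [Fintype I] [Fintype S] [DecidableEq I] [DecidableEq S]

/-- `i` has strictly higher priority than `j` at school `s`. -/
def Prio.higher (E : Prio I S) (s : S) (i j : I) : Prop :=
  E.prank s i < E.prank s j

/-- A matching assigns to each student a school or himself (`none`). -/
abbrev Matching (I S : Type) := I → Option S

/-- The set of students assigned to school `s`. -/
def assigned (μ : Matching I S) (s : S) : Finset I :=
  Finset.univ.filter (fun i => μ i = some s)

/-- Quotas are respected. -/
def Feasible (E : Prio I S) (μ : Matching I S) : Prop :=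
  ∀ s, (assigned μ s).card ≤ E.quota s

/-- `(i, s)` is a blocking pair of `μ` with respect to preferences `R`:
`i` strictly prefers `s` to his assignment, and either `s` has an empty seat
(wastefulness) or some student assigned to `s` has lower priority than `i`
(justified envy). -/
def Blocks (E : Prio I S) (R : I → Pref S) (μ : Matching I S) (i : I) (s : S) : Prop :=
  (R i).rank (some s) < (R i).rank (μ i) ∧
    ((assigned μ s).card < E.quota s ∨ ∃ j, μ j = some s ∧ E.higher s i j)

/-- Individual rationality: every student weakly prefers his assignment to being unmatched. -/
def IndivRat (R : I → Pref S) (μ : Matching I S) : Prop :=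
  ∀ i, (R i).rank (μ i) ≤ (R i).rank none

/-- Non-wastefulness: no student prefers a school with an empty seat to his assignment. -/
def NonWasteful (E : Prio I S) (R : I → Pref S) (μ : Matching I S) : Prop :=
  ∀ i s, (R i).rank (some s) < (R i).rank (μ i) → E.quota s ≤ (assigned μ s).card

/-- Stability: feasible, individually rational, and no blocking pair
(no justified envy and non-wasteful). -/
def Stable (E : Prio I S) (R : I → Pref S) (μ : Matching I S) : Prop :=
  Feasible E μ ∧ IndivRat R μ ∧ ∀ i s, ¬ Blocks E R μ i s

/-- The student-optimal stable matching for the (reported) preferences. -/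
def StudentOptimal (E : Prio I S) (R : I → Pref S) (μ : Matching I S) : Prop :=
  Stable E R μ ∧ ∀ ν, Stable E R ν → ∀ i, (R i).rank (μ i) ≤ (R i).rank (ν i)

open Classical in
/-- The student-proposing deferred acceptance mechanism: by the Gale–Shapley theorem its
outcome is the (unique) student-optimal stable matching of the reported preferences. -/
noncomputable def DA (E : Prio I S) (R : I → Pref S) : Matching I S :=
  if h : ∃ μ, StudentOptimal E R μ then h.choose else fun _ => none

/-- A strict upper bound for the values of a ranking. -/
noncomputable def bnd (p : Pref S) : ℕ := (Finset.univ.sup p.rank) + 1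

lemma rank_lt_bnd (p : Pref S) (x : Option S) : p.rank x < bnd p :=
  Nat.lt_succ_of_le (Finset.le_sup (Finset.mem_univ x))

private lemma mul_add_lt {a K B r : ℕ} (ha : a ≤ K) (hr : r < B) :
    a * B + r < (K + 1) * B := by
  calc a * B + r < a * B + B := by omega
    _ = (a + 1) * B := by ring
    _ ≤ (K + 1) * B := Nat.mul_le_mul (by omega) le_rfl

/-- Is an alternative "inside the market" `A`?  `none` always is. -/
def goodB (A : S → Prop) [DecidablePred A] : Option S → Bool
  | none => true
  | some s => decide (A s)

/-- The preference truncated to the set of schools `A`: schools in `A` (and the outside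
option `none`) keep their relative order, while all schools outside `A` are pushed below
`none` (become unacceptable), keeping their relative order among themselves. -/
noncomputable def trunc (A : S → Prop) [DecidablePred A] (p : Pref S) : Pref S where
  rank x := (if goodB A x then 0 else bnd p) + p.rank x
  inj := by
    intro x y h
    by_cases hx : goodB A x <;> by_cases hy : goodB A y <;>
      simp only [hx, hy, if_true, if_false, Bool.false_eq_true, zero_add] at h
    · exact p.inj h
    · have := rank_lt_bnd p x; omega
    · have := rank_lt_bnd p y; omega
    · exact p.inj (by omega)

/-- The reshuffled preference with respect to a tier structure `t`: acceptable schools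
are grouped by tier in increasing tier order (keeping the original relative order within
each tier) above `none`, and all unacceptable schools are placed below `none`. -/
noncomputable def reshuffle (t : S → ℕ) (p : Pref S) : Pref S where
  rank x :=
    Option.elim x ((Finset.univ.sup t + 1) * bnd p)
      (fun s =>
        if p.rank (some s) < p.rank none then t s * bnd p + p.rank (some s)
        else (Finset.univ.sup t + 1) * bnd p + 1 + p.rank (some s))
  inj := by
    have hB : ∀ x, p.rank x < bnd p := rank_lt_bnd p
    have hK : ∀ s : S, t s ≤ Finset.univ.sup t := fun s => Finset.le_sup (Finset.mem_univ s)
    intro x y h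
    rcases x with _ | s <;> rcases y with _ | s' <;>
      simp only [Option.elim_none, Option.elim_some] at h
    · rfl
    · by_cases hy : p.rank (some s') < p.rank none <;> simp only [hy, if_true, if_false] at h
      · have := mul_add_lt (hK s') (hB (some s')); omega
      · omega
    · by_cases hx : p.rank (some s) < p.rank none <;> simp only [hx, if_true, if_false] at h
      · have := mul_add_lt (hK s) (hB (some s)); omega
      · omega
    · by_cases hx : p.rank (some s) < p.rank none <;>
        by_cases hy : p.rank (some s') < p.rank none <;>
        simp only [hx, hy, if_true, if_false] at h
      · have hts : t s = t s' := by
          rcases Nat.lt_trichotomy (t s) (t s') with h1 | h1 | h1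
          · have h2 : t s * bnd p + p.rank (some s) < t s' * bnd p + p.rank (some s') := by
              have h3 := mul_add_lt (a := t s) (K := t s' - 1) (B := bnd p) (by omega) (hB (some s))
              have h4 : (t s' - 1 + 1) * bnd p = t s' * bnd p := by congr 1; omega
              omega
            omega
          · exact h1
          · have h2 : t s' * bnd p + p.rank (some s') < t s * bnd p + p.rank (some s) := by
              have h3 := mul_add_lt (a := t s') (K := t s - 1) (B := bnd p) (by omega) (hB (some s'))
              have h4 : (t s - 1 + 1) * bnd p = t s * bnd p := by congr 1; omega
              omega
            omega
        rw [hts] at h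
        exact p.inj (by omega)
      · have := mul_add_lt (hK s) (hB (some s)); omega
      · have := mul_add_lt (hK s') (hB (some s')); omega
      · exact p.inj (by omega)

/-- A tier structure assigning each school a tier in `{1, …, T}`, each tier nonempty. -/
def IsTierStructure (t : S → ℕ) (T : ℕ) : Prop :=
  (∀ s, 1 ≤ t s ∧ t s ≤ T) ∧ ∀ k, 1 ≤ k → k ≤ T → ∃ s, t s = k

/-- Rounds `1, …, k` of the tiered deferred acceptance mechanism: in round `k` the
students left unmatched so far participate in the DA mechanism with their preferences
truncated to the tier-`k` schools (already matched students participate with nothing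
acceptable); students matched in earlier rounds keep their assignments. -/
noncomputable def TDAaux (E : Prio I S) (t : S → ℕ) (Q : I → Pref S) : ℕ → Matching I S
  | 0 => fun _ => none
  | k + 1 => fun i =>
      match TDAaux E t Q k i with
      | some s => some s
      | none =>
          DA E (fun j =>
            if TDAaux E t Q k j = none then trunc (fun s => t s = k + 1) (Q j)
            else trunc (fun _ => False) (Q j)) i

/-- The tiered deferred acceptance mechanism under tier structure `t`. -/
noncomputable def TDA (E : Prio I S) (t : S → ℕ) (Q : I → Pref S) : Matching I S :=
  TDAaux E t Q (Finset.univ.sup t)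

/-- `Q` is a (pure) Nash equilibrium of the preference revelation game induced by the
mechanism `f` when the true preferences are `R`: no student can obtain a school he truly
strictly prefers by unilaterally changing his report. -/
def NashEq (R : I → Pref S) (f : (I → Pref S) → Matching I S) (Q : I → Pref S) : Prop :=
  ∀ (i : I) (Qi' : Pref S),
    (R i).rank (f Q i) ≤ (R i).rank (f (Function.update Q i Qi') i)

/-- `μ` is a Nash equilibrium outcome of the revelation game induced by `f` at true
preferences `R`. -/
def NashOutcome (R : I → Pref S) (f : (I → Pref S) → Matching I S) (μ : Matching I S) : Prop :=
  ∃ Q, NashEq R f Q ∧ f Q = μ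

/-- The preference `p` is aligned with the tier structure `t`: a (weakly) more preferred
school always lies in a weakly earlier tier. -/
def AlignedPref (t : S → ℕ) (p : Pref S) : Prop :=
  ∀ s s' : S, p.rank (some s) ≤ p.rank (some s') → t s ≤ t s'

/-- `p` lists exactly the school in `o` (if any) as acceptable. -/
def OnlyAcceptable (p : Pref S) (o : Option S) : Prop :=
  ∀ s : S, (p.rank (some s) < p.rank none ↔ o = some s)

/-- An Ergin cycle of the priority structure among the schools in `A`. -/
def Cycle (E : Prio I S) (A : S → Prop) : Prop :=
  ∃ a b : S, A a ∧ A b ∧ a ≠ b ∧ ∃ i j k : I,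
    E.higher a i j ∧ E.higher a j k ∧ E.higher b k i ∧
    ∃ Ia Ib : Finset I, Disjoint Ia Ib ∧
      (∀ l ∈ Ia, l ≠ i ∧ l ≠ j ∧ l ≠ k ∧ E.higher a l j) ∧
      (∀ l ∈ Ib, l ≠ i ∧ l ≠ j ∧ l ≠ k ∧ E.higher b l i) ∧
      Ia.card = E.quota a - 1 ∧ Ib.card = E.quota b - 1

/-- Within-tier acyclicity of a generalized priority structure: no Ergin cycle among the
schools of any single tier. -/
def WithinTierAcyclic (E : Prio I S) (t : S → ℕ) : Prop :=
  ∀ k : ℕ, ¬ Cycle E (fun s => t s = k)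

/-- The (strict) preference `pr` of school `s` over sets of students is a responsive
extension of its priorities. -/
def Responsive (E : Prio I S) (s : S) (pr : Finset I → Finset I → Prop) : Prop :=
  ∀ (J : Finset I) (i j : I), i ∉ J → j ∉ J → E.higher s i j →
    pr (insert i J) (insert j J)

/-- `t` is a refinement of `t'`: `t'` ranks `a` in a strictly later tier than `b` only
if `t` does. -/
def Refines (t t' : S → ℕ) : Prop :=
  ∀ a b : S, t' b < t' a → t b < t a


/-! ### Auxiliary development: the deferred acceptance algorithm -/

section AuxDA

/-- Nothing is acceptable under `p`. -/
def NA (p : Pref S) : Prop := ∀ s : S, p.rank none < p.rank (some s)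

lemma gt_none_of_not_acc {p : Pref S} {s : S} (h : ¬ p.rank (some s) < p.rank none) :
    p.rank none < p.rank (some s) := by
  rcases lt_trichotomy (p.rank none) (p.rank (some s)) with h1 | h1 | h1
  · exact h1
  · exact absurd (p.inj h1) (by simp)
  · exact absurd h1 h

lemma na_iff {p : Pref S} : NA p ↔ ∀ s : S, ¬ p.rank (some s) < p.rank none := by
  constructor
  · intro h s h'
    have := h s; omega
  · intro h s
    exact gt_none_of_not_acc (h s)

/-- The best alternative among the schools in `A` and the outside option. -/
noncomputable def choice (p : Pref S) (A : Finset S) : Option S :=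
  if h : (A.filter fun s => p.rank (some s) < p.rank none).Nonempty then
    some (Finset.exists_min_image _ (fun s => p.rank (some s)) h).choose
  else none

lemma choice_some {p : Pref S} {A : Finset S} {s : S} (h : choice p A = some s) :
    s ∈ A ∧ p.rank (some s) < p.rank none ∧ ∀ s' ∈ A, p.rank (some s) ≤ p.rank (some s') := by
  unfold choice at h
  split_ifs at h with hne
  · obtain ⟨hmem, hmin⟩ := (Finset.exists_min_image _ (fun s => p.rank (some s)) hne).choose_spec
    obtain rfl := Option.some.inj h
    obtain ⟨hA, hacc⟩ := Finset.mem_filter.mp hmem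
    refine ⟨hA, hacc, fun s' hs' => ?_⟩
    by_cases hacc' : p.rank (some s') < p.rank none
    · exact hmin s' (Finset.mem_filter.mpr ⟨hs', hacc'⟩)
    · have := gt_none_of_not_acc hacc'; omega

lemma choice_none {p : Pref S} {A : Finset S} (h : choice p A = none) :
    ∀ s ∈ A, p.rank none < p.rank (some s) := by
  intro s hs
  unfold choice at h
  split_ifs at h with hne
  apply gt_none_of_not_acc
  intro hacc
  exact hne ⟨s, Finset.mem_filter.mpr ⟨hs, hacc⟩⟩

lemma choice_le {p : Pref S} {A : Finset S} {x : Option S}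
    (hx : x = none ∨ ∃ u ∈ A, x = some u) : p.rank (choice p A) ≤ p.rank x := by
  cases hc : choice p A with
  | none =>
    rcases hx with rfl | ⟨u, hu, rfl⟩
    · exact le_rfl
    · exact le_of_lt (choice_none hc u hu)
  | some s =>
    obtain ⟨_, hacc, hmin⟩ := choice_some hc
    rcases hx with rfl | ⟨u, hu, rfl⟩
    · exact le_of_lt hacc
    · exact hmin u hu

lemma choice_le_none (p : Pref S) (A : Finset S) : p.rank (choice p A) ≤ p.rank none :=
  choice_le (Or.inl rfl)

variable (E : Prio I S) (P : I → Pref S)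

/-- The current proposal of student `j`, given rejections-so-far `D`. -/
noncomputable def prp (D : I → Finset S) (j : I) : Option S :=
  choice (P j) (Finset.univ \ D j)

/-- The set of students currently proposing to school `s`. -/
noncomputable def props (D : I → Finset S) (s : S) : Finset I :=
  Finset.univ.filter fun j => prp P D j = some s

/-- The number of current proposers at `s` with higher priority than `i`. -/
noncomputable def bc (D : I → Finset S) (s : S) (i : I) : ℕ :=
  ((props P D s).filter fun j => E.prank s j < E.prank s i).card

/-- One simultaneous round of proposals and rejections. -/
noncomputable def step (D : I → Finset S) (j : I) : Finset S :=
  match prp P D j with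
  | none => D j
  | some s => if E.quota s ≤ bc E P D s j then insert s (D j) else D j

lemma step_none {D : I → Finset S} {j : I} (h : prp P D j = none) : step E P D j = D j := by
  unfold step; rw [h]

lemma step_some {D : I → Finset S} {j : I} {s : S} (h : prp P D j = some s) :
    step E P D j = if E.quota s ≤ bc E P D s j then insert s (D j) else D j := by
  unfold step; rw [h]

lemma subset_step (D : I → Finset S) (j : I) : D j ⊆ step E P D j := by
  cases h : prp P D j with
  | none => rw [step_none E P h]
  | some s =>
    rw [step_some E P h]
    split_ifs
    · exact Finset.subset_insert _ _
    · exact Finset.Subset.refl _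
lemma prp_some_mem {D : I → Finset S} {j : I} {s : S} (h : prp P D j = some s) :
    s ∉ D j := by
  have := (choice_some h).1
  exact (Finset.mem_sdiff.mp this).2

/-- The run of the algorithm. -/
noncomputable def run : ℕ → I → Finset S
  | 0 => fun _ => ∅
  | n + 1 => step E P (run n)

/-- Total number of recorded rejections. -/
noncomputable def msum (D : I → Finset S) : ℕ := ∑ j, (D j).card

lemma msum_lt {D : I → Finset S} (h : step E P D ≠ D) : msum D < msum (step E P D) := by
  obtain ⟨j, hj⟩ := Function.ne_iff.mp h
  apply Finset.sum_lt_sum (fun j _ => Finset.card_le_card (subset_step E P D j))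
  exact ⟨j, Finset.mem_univ j, Finset.card_lt_card (HasSubset.Subset.ssubset_of_ne
    (subset_step E P D j) (Ne.symm hj))⟩

lemma msum_le (D : I → Finset S) : msum D ≤ Fintype.card I * Fintype.card S := by
  calc msum D ≤ ∑ _j : I, Fintype.card S :=
        Finset.sum_le_sum (fun j _ => Finset.card_le_univ _)
    _ = Fintype.card I * Fintype.card S := by
        rw [Finset.sum_const, smul_eq_mul, Finset.card_univ]

lemma run_stab {n m : ℕ} (h : step E P (run E P n) = run E P n) (hnm : n ≤ m) :
    run E P m = run E P n := by
  induction m, hnm using Nat.le_induction with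
  | base => rfl
  | succ m hm ih => show step E P (run E P m) = _ ; rw [ih, h]

/-- The terminal rejection state. -/
noncomputable def Dfin : I → Finset S := run E P (Fintype.card I * Fintype.card S + 1)

lemma Dfin_fix : step E P (Dfin E P) = Dfin E P := by
  set N := Fintype.card I * Fintype.card S with hN
  have hex : ∃ n ≤ N, step E P (run E P n) = run E P n := by
    by_contra hc
    push_neg at hc
    have key : ∀ n, n ≤ N + 1 → n ≤ msum (run E P n) := by
      intro n
      induction n with
      | zero => intro _; exact Nat.zero_le _
      | succ n ih =>
        intro hn
        have h1 := ih (by omega)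
        have h2 : msum (run E P n) < msum (run E P (n + 1)) :=
          msum_lt E P (hc n (by omega))
        omega
    have := key (N + 1) le_rfl
    have := msum_le (run E P (N + 1))
    omega
  obtain ⟨n, hn, hfix⟩ := hex
  show step E P (run E P (N + 1)) = run E P (N + 1)
  rw [run_stab E P hfix (by omega), hfix]

/-- The deferred-acceptance matching computed by the algorithm. -/
noncomputable def alg : Matching I S := fun j => prp P (Dfin E P) j

lemma assigned_alg (s : S) : assigned (alg E P) s = props P (Dfin E P) s := rfl

lemma fix_no_reject {j : I} {s : S} (h : prp P (Dfin E P) j = some s) :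
    bc E P (Dfin E P) s j < E.quota s := by
  by_contra hq
  push_neg at hq
  have hstep : step E P (Dfin E P) j = insert s (Dfin E P j) := by
    rw [step_some E P h, if_pos hq]
  have hsin : s ∈ Dfin E P j := by
    rw [Dfin_fix E P] at hstep
    rw [hstep]
    exact Finset.mem_insert_self _ _
  exact prp_some_mem P h hsin
lemma kept_prp {D : I → Finset S} {l : I} {s : S} (hl : prp P D l = some s)
    (hk : ¬ E.quota s ≤ bc E P D s l) : prp P (step E P D) l = some s := by
  have hDl : step E P D l = D l := by rw [step_some E P hl, if_neg hk]
  show choice (P l) (Finset.univ \ step E P D l) = some s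
  rw [hDl]
  exact hl

lemma bc_step {D : I → Finset S} {s : S} {i : I} (h : E.quota s ≤ bc E P D s i) :
    E.quota s ≤ bc E P (step E P D) s i := by
  classical
  set B := (props P D s).filter (fun j => E.prank s j < E.prank s i) with hB
  set Rj := B.filter (fun j => E.quota s ≤ bc E P D s j) with hR
  have htarget : ∀ l, prp P D l = some s → ¬ E.quota s ≤ bc E P D s l →
      E.prank s l < E.prank s i →
      l ∈ (props P (step E P D) s).filter (fun j => E.prank s j < E.prank s i) := by
    intro l h1 h2 h3
    refine Finset.mem_filter.mpr ⟨?_, h3⟩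
    exact Finset.mem_filter.mpr ⟨Finset.mem_univ l, kept_prp E P h1 h2⟩
  by_cases hRne : Rj.Nonempty
  · obtain ⟨j₀, hj₀R, hj₀min⟩ := Finset.exists_min_image Rj (fun j => E.prank s j) hRne
    have hj₀B : j₀ ∈ B := (Finset.mem_filter.mp hj₀R).1
    have hj₀bc : E.quota s ≤ bc E P D s j₀ := (Finset.mem_filter.mp hj₀R).2
    have hj₀i : E.prank s j₀ < E.prank s i := (Finset.mem_filter.mp hj₀B).2
    have hsub : (props P D s).filter (fun l => E.prank s l < E.prank s j₀) ⊆
        (props P (step E P D) s).filter (fun j => E.prank s j < E.prank s i) := by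
      intro l hl
      obtain ⟨hlp, hlt⟩ := Finset.mem_filter.mp hl
      have hlprp : prp P D l = some s := (Finset.mem_filter.mp hlp).2
      have hli : E.prank s l < E.prank s i := lt_trans hlt hj₀i
      have hlkept : ¬ E.quota s ≤ bc E P D s l := by
        intro hbad
        have hlR : l ∈ Rj := by
          refine Finset.mem_filter.mpr ⟨Finset.mem_filter.mpr ⟨hlp, hli⟩, hbad⟩
        have := hj₀min l hlR
        omega
      exact htarget l hlprp hlkept hli
    have := Finset.card_le_card hsub
    unfold bc at hj₀bc ⊢
    omega
  · have hsub : B ⊆ (props P (step E P D) s).filter (fun j => E.prank s j < E.prank s i) := by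
      intro l hl
      obtain ⟨hlp, hlt⟩ := Finset.mem_filter.mp hl
      have hlprp : prp P D l = some s := (Finset.mem_filter.mp hlp).2
      have hlkept : ¬ E.quota s ≤ bc E P D s l := by
        intro hbad
        exact hRne ⟨l, Finset.mem_filter.mpr ⟨hl, hbad⟩⟩
      exact htarget l hlprp hlkept hlt
    have hthis := Finset.card_le_card hsub
    rw [hB] at hthis
    unfold bc at h ⊢
    omega

/-- The key invariant: every recorded rejection is currently justified. -/
def Inv (D : I → Finset S) : Prop := ∀ j s, s ∈ D j → E.quota s ≤ bc E P D s j

lemma Inv_step {D : I → Finset S} (h : Inv E P D) : Inv E P (step E P D) := by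
  intro j s hs
  cases hp : prp P D j with
  | none =>
    rw [step_none E P hp] at hs
    exact bc_step E P (h j s hs)
  | some s₁ =>
    rw [step_some E P hp] at hs
    split_ifs at hs with hq
    · rcases Finset.mem_insert.mp hs with rfl | hs'
      · exact bc_step E P hq
      · exact bc_step E P (h j s hs')
    · exact bc_step E P (h j s hs)

lemma Inv_run (n : ℕ) : Inv E P (run E P n) := by
  induction n with
  | zero => intro j s hs; simp [run] at hs
  | succ n ih => exact Inv_step E P ih

lemma Inv_Dfin : Inv E P (Dfin E P) := Inv_run E P _

lemma alg_feasible : Feasible E (alg E P) := by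
  intro s
  rw [assigned_alg]
  by_contra hq
  push_neg at hq
  have hne : (props P (Dfin E P) s).Nonempty := Finset.card_pos.mp (by omega)
  obtain ⟨i, hi, hmax⟩ := Finset.exists_max_image _ (fun j => E.prank s j) hne
  have hiprp : prp P (Dfin E P) i = some s := (Finset.mem_filter.mp hi).2
  have herase : (props P (Dfin E P) s).erase i ⊆
      (props P (Dfin E P) s).filter (fun j => E.prank s j < E.prank s i) := by
    intro j hj
    obtain ⟨hne', hjm⟩ := Finset.mem_erase.mp hj
    refine Finset.mem_filter.mpr ⟨hjm, ?_⟩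
    have h1 := hmax j hjm
    have h2 : E.prank s j ≠ E.prank s i := fun he => hne' (E.inj s he)
    omega
  have h3 := Finset.card_le_card herase
  rw [Finset.card_erase_of_mem hi] at h3
  have h4 := fix_no_reject E P hiprp
  unfold bc at h4
  omega

lemma alg_IR : IndivRat P (alg E P) := fun i => choice_le_none _ _

lemma alg_noblock (i : I) (s : S) : ¬ Blocks E P (alg E P) i s := by
  rintro ⟨hlt, hor⟩
  by_cases hmem : s ∈ Dfin E P i
  · have hbc := Inv_Dfin E P i s hmem
    have hfeas := alg_feasible E P s
    rw [assigned_alg] at hor hfeas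
    have hsub : (props P (Dfin E P) s).filter (fun j => E.prank s j < E.prank s i) ⊆
        props P (Dfin E P) s := Finset.filter_subset _ _
    have hcards := Finset.card_le_card hsub
    unfold bc at hbc
    have heq : (props P (Dfin E P) s).filter (fun j => E.prank s j < E.prank s i) =
        props P (Dfin E P) s :=
      Finset.eq_of_subset_of_card_le hsub (by omega)
    rcases hor with hcard | ⟨j, hj, hhj⟩
    · omega
    · have hjm : j ∈ props P (Dfin E P) s :=
        Finset.mem_filter.mpr ⟨Finset.mem_univ j, hj⟩
      rw [← heq] at hjm
      have := (Finset.mem_filter.mp hjm).2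
      have : E.prank s i < E.prank s j := hhj
      omega
  · have : (P i).rank (alg E P i) ≤ (P i).rank (some s) :=
      choice_le (Or.inr ⟨s, Finset.mem_sdiff.mpr ⟨Finset.mem_univ s, hmem⟩, rfl⟩)
    omega

lemma alg_stable : Stable E P (alg E P) :=
  ⟨alg_feasible E P, alg_IR E P, alg_noblock E P⟩
/-- Master invariant: a student never gets rejected (in the run for profile `P'`) by the
school he is assigned to under any matching that is stable for `P`, where `P` and `P'`
agree on all students whose `P'`-preference has some acceptable school. -/
lemma master {P P' : I → Pref S} (hZ : ∀ j, P' j = P j ∨ NA (P' j))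
    {ν : Matching I S} (hν : Stable E P ν) :
    ∀ n j s, P' j = P j → ν j = some s → s ∉ run E P' n j := by
  intro n
  induction n with
  | zero => intro j s _ _ h; simp [run] at h
  | succ n ih =>
    intro j s hj hνj hmem
    by_cases hold : s ∈ run E P' n j
    · exact ih j s hj hνj hold
    set D := run E P' n with hD
    have hmem' : s ∈ step E P' D j := hmem
    obtain ⟨hp, hq⟩ : prp P' D j = some s ∧ E.quota s ≤ bc E P' D s j := by
      cases hpp : prp P' D j with
      | none => rw [step_none E P' hpp] at hmem'; exact absurd hmem' hold
      | some s₁ =>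
        rw [step_some E P' hpp] at hmem'
        split_ifs at hmem' with hqq
        · rcases Finset.mem_insert.mp hmem' with he | hmem''
          · rw [he]; exact ⟨rfl, hqq⟩
          · exact absurd hmem'' hold
        · exact absurd hmem' hold
    set C := (props P' D s).filter (fun l => E.prank s l < E.prank s j) with hC
    have hCcard : E.quota s ≤ C.card := hq
    have hCfact : ∀ l ∈ C, P' l = P l ∧ (P l).rank (some s) ≤ (P l).rank (ν l) ∧
        E.prank s l < E.prank s j := by
      intro l hl
      obtain ⟨hlp, hlt⟩ := Finset.mem_filter.mp hl
      have hlprp : prp P' D l = some s := (Finset.mem_filter.mp hlp).2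
      have hlacc : (P' l).rank (some s) < (P' l).rank none := (choice_some hlprp).2.1
      have hPl : P' l = P l := by
        rcases hZ l with h' | h'
        · exact h'
        · exact absurd hlacc (na_iff.mp h' s)
      refine ⟨hPl, ?_, hlt⟩
      cases hvl : ν l with
      | none => rw [← hPl]; exact le_of_lt hlacc
      | some u =>
        have hu : u ∉ D l := ih l u hPl hvl
        have := (choice_some hlprp).2.2 u (Finset.mem_sdiff.mpr ⟨Finset.mem_univ u, hu⟩)
        rw [← hPl]; exact this
    by_cases hall : ∀ l ∈ C, ν l = some s
    · have hins : insert j C ⊆ assigned ν s := by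
        intro l hl
        rcases Finset.mem_insert.mp hl with rfl | hl'
        · exact Finset.mem_filter.mpr ⟨Finset.mem_univ l, hνj⟩
        · exact Finset.mem_filter.mpr ⟨Finset.mem_univ l, hall l hl'⟩
      have hjC : j ∉ C := by
        intro hjC
        exact absurd (hCfact j hjC).2.2 (lt_irrefl _)
      have h1 := Finset.card_le_card hins
      rw [Finset.card_insert_of_notMem hjC] at h1
      have := hν.1 s
      omega
    · push_neg at hall
      obtain ⟨l, hlC, hlne⟩ := hall
      obtain ⟨hPl, hle, hlt⟩ := hCfact l hlC
      have hstrict : (P l).rank (some s) < (P l).rank (ν l) := by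
        rcases lt_or_eq_of_le hle with h' | h'
        · exact h'
        · exact absurd ((P l).inj h') (fun he => hlne he.symm)
      exact hν.2.2 l s ⟨hstrict, Or.inr ⟨j, hνj, hlt⟩⟩

lemma alg_opt : StudentOptimal E P (alg E P) := by
  refine ⟨alg_stable E P, fun ν hν j => ?_⟩
  cases hvj : ν j with
  | none => exact choice_le_none _ _
  | some u =>
    have hu : u ∉ Dfin E P j :=
      master E (fun j => Or.inl rfl) hν _ j u rfl hvj
    exact choice_le (Or.inr ⟨u, Finset.mem_sdiff.mpr ⟨Finset.mem_univ u, hu⟩, rfl⟩)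

lemma exists_SO : ∃ μ, StudentOptimal E P μ := ⟨alg E P, alg_opt E P⟩

lemma SO_unique {μ ν : Matching I S} (h1 : StudentOptimal E P μ)
    (h2 : StudentOptimal E P ν) : μ = ν := by
  funext j
  have ha := h1.2 ν h2.1 j
  have hb := h2.2 μ h1.1 j
  exact (P j).inj (le_antisymm ha hb)

lemma DA_SO : StudentOptimal E P (DA E P) := by
  unfold DA
  rw [dif_pos (exists_SO E P)]
  exact (exists_SO E P).choose_spec

lemma DA_eq_alg : DA E P = alg E P := SO_unique E P (DA_SO E P) (alg_opt E P)

lemma DA_none {i : I} (h : NA (P i)) : DA E P i = none := by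
  have hIR := (DA_SO E P).1.2.1 i
  cases hd : DA E P i with
  | none => rfl
  | some s => rw [hd] at hIR; exact absurd hIR (not_le.mpr (h s))

lemma DA_acc {j : I} {s : S} (h : DA E P j = some s) :
    (P j).rank (some s) < (P j).rank none := by
  have hIR := (DA_SO E P).1.2.1 j
  rw [h] at hIR
  exact lt_of_le_of_ne hIR (fun he => by cases (P j).inj he)

lemma X1 {P P' : I → Pref S} (hZ : ∀ j, P' j = P j ∨ NA (P' j))
    {ν : Matching I S} (hν : Stable E P ν) {j : I} (hj : P' j = P j) :
    (P j).rank (DA E P' j) ≤ (P j).rank (ν j) := by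
  rw [DA_eq_alg]
  have halg : alg E P' j = choice (P j) (Finset.univ \ Dfin E P' j) := by
    show choice (P' j) _ = _
    rw [hj]
  rw [halg]
  cases hvj : ν j with
  | none => exact choice_le_none _ _
  | some u =>
    have hu : u ∉ Dfin E P' j := master E hZ hν _ j u hj hvj
    exact choice_le (Or.inr ⟨u, Finset.mem_sdiff.mpr ⟨Finset.mem_univ u, hu⟩, rfl⟩)

lemma X2 {P P' : I → Pref S} (hZ : ∀ j, P' j = P j ∨ NA (P' j))
    {ν : Matching I S} (hν : Stable E P ν) {s : S}
    (hs : (assigned ν s).card < E.quota s) :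
    assigned (DA E P') s ⊆ assigned ν s := by
  intro j hjm
  have hj : DA E P' j = some s := (Finset.mem_filter.mp hjm).2
  have hacc : (P' j).rank (some s) < (P' j).rank none := DA_acc E P' hj
  have hPj : P' j = P j := by
    rcases hZ j with h' | h'
    · exact h'
    · exact absurd hacc (na_iff.mp h' s)
  have h1 := X1 E hZ hν hPj
  rw [hj] at h1
  have hνjs : ν j = some s := by
    by_contra hne
    have hstrict : (P j).rank (some s) < (P j).rank (ν j) := by
      rcases lt_or_eq_of_le h1 with h' | h'
      · exact h'
      · exact absurd ((P j).inj h') (fun he => hne he.symm)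
    exact hν.2.2 j s ⟨hstrict, Or.inl hs⟩
  exact Finset.mem_filter.mpr ⟨Finset.mem_univ j, hνjs⟩

lemma stable_congr {P₁ P₂ : I → Pref S}
    (h : ∀ j, P₁ j = P₂ j ∨ (NA (P₁ j) ∧ NA (P₂ j))) {μ : Matching I S}
    (hμ : Stable E P₁ μ) : Stable E P₂ μ := by
  have hnone : ∀ j, NA (P₁ j) → μ j = none := by
    intro j hNA
    have := hμ.2.1 j
    cases hm : μ j with
    | none => rfl
    | some s => rw [hm] at this; exact absurd this (not_le.mpr (hNA s))
  refine ⟨hμ.1, ?_, ?_⟩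
  · intro j
    rcases h j with he | ⟨hNA1, _⟩
    · rw [← he]; exact hμ.2.1 j
    · rw [hnone j hNA1]
  · intro j s hB
    rcases h j with he | ⟨hNA1, hNA2⟩
    · exact hμ.2.2 j s ⟨he ▸ hB.1, hB.2⟩
    · have := hB.1
      rw [hnone j hNA1] at this
      exact absurd this (not_lt.mpr (le_of_lt (hNA2 s)))

lemma DA_congr {P₁ P₂ : I → Pref S}
    (h : ∀ j, P₁ j = P₂ j ∨ (NA (P₁ j) ∧ NA (P₂ j))) : DA E P₁ = DA E P₂ := by
  have hsymm : ∀ j, P₂ j = P₁ j ∨ (NA (P₂ j) ∧ NA (P₁ j)) := by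
    intro j
    rcases h j with he | ⟨h1, h2⟩
    · exact Or.inl he.symm
    · exact Or.inr ⟨h2, h1⟩
  apply SO_unique E P₂ ?_ (DA_SO E P₂)
  refine ⟨stable_congr E h (DA_SO E P₁).1, fun ν hν j => ?_⟩
  have hν₁ : Stable E P₁ ν := stable_congr E hsymm hν
  rcases h j with he | ⟨hNA1, hNA2⟩
  · rw [← he]
    exact (DA_SO E P₁).2 ν hν₁ j
  · have h1 : DA E P₁ j = none := DA_none E P₁ hNA1
    have h2 : ν j = none := by
      have := hν₁.2.1 j
      cases hm : ν j with
      | none => rfl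
      | some s => rw [hm] at this; exact absurd this (not_le.mpr (hNA1 s))
    rw [h1, h2]
lemma trunc_rank_none {A : S → Prop} [DecidablePred A] (p : Pref S) :
    (trunc A p).rank none = p.rank none := by
  simp [trunc, goodB]

lemma trunc_acc {A : S → Prop} [DecidablePred A] {p : Pref S} {s : S} :
    (trunc A p).rank (some s) < (trunc A p).rank none ↔
      (A s ∧ p.rank (some s) < p.rank none) := by
  rw [trunc_rank_none]
  by_cases h : A s
  · simp [trunc, goodB, h]
  · simp only [trunc, goodB, h]
    have := rank_lt_bnd p none
    simp only [decide_eq_true_eq]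
    constructor
    · intro h'
      split_ifs at h' with hh
      · exact hh.elim
      · omega
    · rintro ⟨hh, _⟩
      exact hh.elim

lemma NA_trunc {A : S → Prop} [DecidablePred A] {p : Pref S}
    (h : ∀ s, A s → ¬ p.rank (some s) < p.rank none) : NA (trunc A p) := by
  rw [na_iff]
  intro s hacc
  obtain ⟨h1, h2⟩ := trunc_acc.mp hacc
  exact h s h1 h2

lemma NA_trunc_false (p : Pref S) : NA (trunc (fun _ => False) p) :=
  NA_trunc (fun _ h => h.elim)

lemma NA_trunc_of_NA {A : S → Prop} [DecidablePred A] {p : Pref S} (h : NA p) :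
    NA (trunc A p) := NA_trunc (fun s _ => na_iff.mp h s)

/-- The profile fed to DA in round `k + 1` of TDA. -/
noncomputable def RP (E : Prio I S) (t : S → ℕ) (Q : I → Pref S) (k : ℕ) : I → Pref S :=
  fun j => if TDAaux E t Q k j = none then trunc (fun s => t s = k + 1) (Q j)
           else trunc (fun _ => False) (Q j)

lemma TDAaux_succ (t : S → ℕ) (Q : I → Pref S) (k : ℕ) (i : I) :
    TDAaux E t Q (k + 1) i =
      match TDAaux E t Q k i with
      | some s => some s
      | none => DA E (RP E t Q k) i := rfl

lemma TDAaux_succ_none (t : S → ℕ) (Q : I → Pref S) {k : ℕ} {i : I}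
    (h : TDAaux E t Q k i = none) :
    TDAaux E t Q (k + 1) i = DA E (RP E t Q k) i := by
  rw [TDAaux_succ, h]

lemma TDAaux_succ_some (t : S → ℕ) (Q : I → Pref S) {k : ℕ} {i : I} {s : S}
    (h : TDAaux E t Q k i = some s) : TDAaux E t Q (k + 1) i = some s := by
  rw [TDAaux_succ, h]

lemma TDAaux_persist (t : S → ℕ) (Q : I → Pref S) {k K : ℕ} {i : I} {s : S}
    (hk : k ≤ K) (h : TDAaux E t Q k i = some s) : TDAaux E t Q K i = some s := by
  induction K, hk using Nat.le_induction with
  | base => exact h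
  | succ K hK ih => exact TDAaux_succ_some E t Q ih

lemma RP_none (t : S → ℕ) (Q : I → Pref S) {k : ℕ} {j : I}
    (h : TDAaux E t Q k j = none) :
    RP E t Q k j = trunc (fun s => t s = k + 1) (Q j) := by
  rw [RP, if_pos h]

lemma RP_some (t : S → ℕ) (Q : I → Pref S) {k : ℕ} {j : I}
    (h : TDAaux E t Q k j ≠ none) :
    RP E t Q k j = trunc (fun _ => False) (Q j) := by
  rw [RP, if_neg h]

lemma tier_le (t : S → ℕ) (Q : I → Pref S) {k : ℕ} {j : I} {s : S}
    (h : TDAaux E t Q k j = some s) : t s ≤ k := by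
  induction k with
  | zero => cases h
  | succ k ih =>
    rw [TDAaux_succ] at h
    cases hk : TDAaux E t Q k j with
    | some s₁ =>
      rw [hk] at h
      have := ih (hk.trans h)
      omega
    | none =>
      rw [hk] at h
      have hacc := DA_acc E _ h
      rw [RP_none E t Q hk] at hacc
      have := (trunc_acc.mp hacc).1
      omega

lemma assigned_stage (t : S → ℕ) (Q : I → Pref S) {s : S} {k K : ℕ}
    (hs : t s = k + 1) (hK : k + 1 ≤ K) :
    assigned (TDAaux E t Q K) s = assigned (DA E (RP E t Q k)) s := by
  ext j
  simp only [assigned, Finset.mem_filter, Finset.mem_univ, true_and]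
  constructor
  · intro h
    induction K, hK using Nat.le_induction with
    | base =>
      rw [TDAaux_succ] at h
      cases hk : TDAaux E t Q k j with
      | some s₁ =>
        rw [hk] at h
        have := tier_le E t Q (hk.trans h)
        omega
      | none => rw [hk] at h; exact h
    | succ K hK ih =>
      rw [TDAaux_succ] at h
      cases hk : TDAaux E t Q K j with
      | some s₁ => rw [hk] at h; exact ih (hk.trans h)
      | none =>
        rw [hk] at h
        have hacc := DA_acc E _ h
        rw [RP_none E t Q hk] at hacc
        have := (trunc_acc.mp hacc).1
        omega
  · intro h
    have hnone : TDAaux E t Q k j = none := by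
      by_contra hne
      rw [DA_none E _ (by rw [RP_some E t Q hne]; exact NA_trunc_false _)] at h
      cases h
    have h1 : TDAaux E t Q (k + 1) j = some s := by
      rw [TDAaux_succ_none E t Q hnone]; exact h
    exact TDAaux_persist E t Q hK h1

lemma TDAaux_none_of_NA (t : S → ℕ) (Q : I → Pref S) {i : I} {K : ℕ}
    (h : ∀ k, k < K → NA (trunc (fun s => t s = k + 1) (Q i))) :
    TDAaux E t Q K i = none := by
  induction K with
  | zero => rfl
  | succ K ih =>
    have hnone := ih (fun k hk => h k (by omega))
    rw [TDAaux_succ_none E t Q hnone]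
    apply DA_none
    rw [RP_none E t Q hnone]
    exact h K (by omega)
lemma RP_Z (t : S → ℕ) {Q Qb : I → Pref S} {i : I}
    (hji : ∀ j, j ≠ i → Qb j = Q j) (hNAi : NA (Qb i)) {k : ℕ}
    (hinv : ∀ j, j ≠ i → TDAaux E t Q k j ≠ none → TDAaux E t Qb k j ≠ none) :
    ∀ j, RP E t Qb k j = RP E t Q k j ∨ NA (RP E t Qb k j) := by
  intro j
  by_cases hj : j = i
  · subst hj
    right
    by_cases hb : TDAaux E t Qb k j = none
    · rw [RP_none E t Qb hb]
      exact NA_trunc_of_NA hNAi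
    · rw [RP_some E t Qb hb]
      exact NA_trunc_false _
  · by_cases hb : TDAaux E t Qb k j = none
    · have hq : TDAaux E t Q k j = none := by
        by_contra h
        exact (hinv j hj h) hb
      left
      rw [RP_none E t Qb hb, RP_none E t Q hq, hji j hj]
    · right
      rw [RP_some E t Qb hb]
      exact NA_trunc_false _

lemma matched_inv (t : S → ℕ) {Q Qb : I → Pref S} {i : I}
    (hji : ∀ j, j ≠ i → Qb j = Q j) (hNAi : NA (Qb i)) :
    ∀ k j, j ≠ i → TDAaux E t Q k j ≠ none → TDAaux E t Qb k j ≠ none := by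
  intro k
  induction k with
  | zero => intro j _ h; exact absurd rfl h
  | succ k ih =>
    intro j hj hmatch
    have hZ := RP_Z E t hji hNAi ih
    cases hk : TDAaux E t Q k j with
    | some s1 =>
      obtain ⟨s2, hs2⟩ := Option.ne_none_iff_exists'.mp (ih j hj (by rw [hk]; simp))
      rw [TDAaux_succ_some E t Qb hs2]
      simp
    | none =>
      rw [TDAaux_succ_none E t Q hk] at hmatch
      obtain ⟨s1, hDA⟩ := Option.ne_none_iff_exists'.mp hmatch
      by_cases hbk : TDAaux E t Qb k j = none
      · have hjP : RP E t Qb k j = RP E t Q k j := by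
          rw [RP_none E t Qb hbk, RP_none E t Q hk, hji j hj]
        have hX := X1 E hZ (DA_SO E (RP E t Q k)).1 hjP
        rw [hDA] at hX
        have hacc := DA_acc E _ hDA
        rw [TDAaux_succ_none E t Qb hbk]
        intro hnone
        rw [hnone] at hX
        omega
      · obtain ⟨s2, hs2⟩ := Option.ne_none_iff_exists'.mp hbk
        rw [TDAaux_succ_some E t Qb hs2]
        simp

lemma runs_eq (t : S → ℕ) {Q₁ Q₂ : I → Pref S} {i : I}
    (hji : ∀ j, j ≠ i → Q₁ j = Q₂ j) {k₀ : ℕ}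
    (hNA1 : ∀ m, m + 1 < k₀ → NA (trunc (fun s => t s = m + 1) (Q₁ i)))
    (hNA2 : ∀ m, m + 1 < k₀ → NA (trunc (fun s => t s = m + 1) (Q₂ i))) :
    ∀ k, k < k₀ → TDAaux E t Q₁ k = TDAaux E t Q₂ k := by
  intro k
  induction k with
  | zero => intro _; rfl
  | succ k ih =>
    intro hk
    have heq := ih (by omega)
    have hDA : DA E (RP E t Q₁ k) = DA E (RP E t Q₂ k) := by
      apply DA_congr
      intro j'
      by_cases hj' : j' = i
      · subst hj'
        right
        constructor
        · by_cases hb : TDAaux E t Q₁ k j' = none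
          · rw [RP_none E t Q₁ hb]; exact hNA1 k hk
          · rw [RP_some E t Q₁ hb]; exact NA_trunc_false _
        · by_cases hb : TDAaux E t Q₂ k j' = none
          · rw [RP_none E t Q₂ hb]; exact hNA2 k hk
          · rw [RP_some E t Q₂ hb]; exact NA_trunc_false _
      · left
        rw [RP, RP, heq, hji j' hj']
    funext j
    rw [TDAaux_succ, TDAaux_succ, heq, hDA]
end AuxDA

/-- Every TDA Nash equilibrium outcome (under any tier structure) is
individually rational and non-wasteful with respect to the true preferences. -/
theorem TDA_NashOutcome_IR_and_nonwasteful
    (E : Prio I S) (t : S → ℕ) (T : ℕ) (ht : IsTierStructure t T)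
    (R : I → Pref S) (μ : Matching I S) (hμ : NashOutcome R (TDA E t) μ) :
    IndivRat R μ ∧ NonWasteful E R μ := by
  obtain ⟨Q, hNE, hQμ⟩ := hμ
  subst hQμ
  constructor
  · -- individual rationality
    intro i
    have hdev := hNE i (trunc (fun _ => False) (R i))
    have hnone : TDA E t (Function.update Q i (trunc (fun _ => False) (R i))) i = none := by
      apply TDAaux_none_of_NA
      intro k _
      apply NA_trunc
      intro s' _ hacc
      rw [Function.update_self] at hacc
      exact na_iff.mp (NA_trunc_false (R i)) s' hacc
    rw [hnone] at hdev
    exact hdev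
  · -- non-wastefulness
    intro i s hlt
    by_contra hq
    push_neg at hq
    obtain ⟨h1k, _⟩ := ht.1 s
    have hsup : t s ≤ Finset.univ.sup t := Finset.le_sup (Finset.mem_univ s)
    obtain ⟨kp, hkp⟩ : ∃ kp, t s = kp + 1 := ⟨t s - 1, by omega⟩
    -- the "only `s` acceptable" preference
    have hpsinj : Function.Injective
        (fun x : Option S => if x = some s then 0 else if x = none then 1
          else 2 + (R i).rank x) := by
      intro x y h
      simp only at h
      by_cases hx1 : x = some s
      · by_cases hy1 : y = some s
        · rw [hx1, hy1]
        · rw [if_pos hx1, if_neg hy1] at h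
          by_cases hy2 : y = none
          · rw [if_pos hy2] at h; omega
          · rw [if_neg hy2] at h; omega
      · by_cases hy1 : y = some s
        · rw [if_neg hx1, if_pos hy1] at h
          by_cases hx2 : x = none
          · rw [if_pos hx2] at h; omega
          · rw [if_neg hx2] at h; omega
        · rw [if_neg hx1, if_neg hy1] at h
          by_cases hx2 : x = none <;> by_cases hy2 : y = none
          · rw [hx2, hy2]
          · rw [if_pos hx2, if_neg hy2] at h; omega
          · rw [if_neg hx2, if_pos hy2] at h; omega
          · rw [if_neg hx2, if_neg hy2] at h
            exact (R i).inj (by omega)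
    set ps : Pref S := ⟨fun x => if x = some s then 0 else if x = none then 1
      else 2 + (R i).rank x, hpsinj⟩ with hps
    have hps_s : ps.rank (some s) = 0 := by simp [hps]
    have hps_none : ps.rank none = 1 := by simp [hps]
    have hps_other : ∀ s'', s'' ≠ s → ¬ ps.rank (some s'') < ps.rank none := by
      intro s'' h
      have h2 : ps.rank (some s'') = 2 + (R i).rank (some s'') := by
        show (if (some s'' : Option S) = some s then 0
          else if (some s'' : Option S) = none then 1 else 2 + (R i).rank (some s'')) = _
        rw [if_neg (by simpa using h), if_neg (by simp)]
      omega
    set Q' := Function.update Q i ps with hQ'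
    set Qb := Function.update Q i (trunc (fun _ => False) (R i)) with hQb
    have hQ'j : ∀ j, j ≠ i → Q' j = Q j := fun j hj => Function.update_of_ne hj _ _
    have hQbj : ∀ j, j ≠ i → Qb j = Q j := fun j hj => Function.update_of_ne hj _ _
    have hQ'i : Q' i = ps := Function.update_self _ _ _
    have hQbi : Qb i = trunc (fun _ => False) (R i) := Function.update_self _ _ _
    have hNAb : NA (Qb i) := by rw [hQbi]; exact NA_trunc_false (R i)
    have hNAps : ∀ m, m + 1 ≠ t s → NA (trunc (fun s' => t s' = m + 1) (Q' i)) := by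
      intro m hm
      rw [hQ'i]
      apply NA_trunc
      intro s'' hs'' hacc
      by_cases he : s'' = s
      · subst he; omega
      · exact hps_other s'' he hacc
    have hNAbAll : ∀ m, NA (trunc (fun s' => t s' = m + 1) (Qb i)) := by
      intro m; rw [hQbi]; exact NA_trunc_of_NA (NA_trunc_false _)
    have hiQb : ∀ K, TDAaux E t Qb K i = none := fun K =>
      TDAaux_none_of_NA E t Qb (fun k _ => hNAbAll k)
    have hA : ∀ k, k < t s → TDAaux E t Q' k = TDAaux E t Qb k :=
      runs_eq E t (fun j hj => (hQ'j j hj).trans (hQbj j hj).symm)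
        (fun m hm => hNAps m (by omega)) (fun m _ => hNAbAll m)
    have hiQ' : ∀ k, k ≤ kp → TDAaux E t Q' k i = none := by
      intro k hk
      rw [hA k (by omega)]
      exact hiQb k
    have hinv := matched_inv E t hQbj hNAb
    have hZkp := RP_Z E t hQbj hNAb (hinv kp)
    have hq' : (assigned (TDAaux E t Q (Finset.univ.sup t)) s).card < E.quota s := hq
    rw [assigned_stage E t Q hkp (by omega)] at hq'
    have hstab := (DA_SO E (RP E t Q kp)).1
    have hempty2 : (assigned (DA E (RP E t Qb kp)) s).card < E.quota s :=
      lt_of_le_of_lt (Finset.card_le_card (X2 E hZkp hstab hq')) hq'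
    set ρ := DA E (RP E t Qb kp) with hρdef
    have hρstable : Stable E (RP E t Qb kp) ρ := (DA_SO E _).1
    have hρi : ρ i = none := by
      apply DA_none
      rw [RP_none E t Qb (hiQb kp)]
      exact hNAbAll kp
    set q' : Pref S := trunc (fun s'' => t s'' = kp + 1) ps with hq'def
    have hq's : q'.rank (some s) < q'.rank none :=
      trunc_acc.mpr ⟨by omega, by rw [hps_s, hps_none]; omega⟩
    have hq'top : ∀ s'', s'' ≠ s → q'.rank none < q'.rank (some s'') := by
      intro s'' h
      apply gt_none_of_not_acc
      intro hacc
      exact hps_other s'' h (trunc_acc.mp hacc).2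
    have hP'' : RP E t Q' kp = Function.update (RP E t Qb kp) i q' := by
      funext j
      by_cases hj : j = i
      · subst hj
        rw [RP_none E t Q' (hiQ' kp le_rfl), hQ'i, Function.update_self]
      · rw [Function.update_of_ne hj]
        by_cases hb : TDAaux E t Qb kp j = none
        · rw [RP_none E t Qb hb, RP_none E t Q' (by rw [hA kp (by omega)]; exact hb),
            hQ'j j hj, hQbj j hj]
        · rw [RP_some E t Qb hb, RP_some E t Q' (by rw [hA kp (by omega)]; exact hb),
            hQ'j j hj, hQbj j hj]
    set ν₀ := Function.update ρ i (some s) with hν₀def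
    have hν₀i : ν₀ i = some s := Function.update_self _ _ _
    have hν₀j : ∀ j, j ≠ i → ν₀ j = ρ j := fun j hj => Function.update_of_ne hj _ _
    have hiassigned : i ∉ assigned ρ s := by
      intro h
      have h2 := (Finset.mem_filter.mp h).2
      rw [hρi] at h2
      cases h2
    have hassign_s : assigned ν₀ s = insert i (assigned ρ s) := by
      ext j
      by_cases hj : j = i
      · subst hj
        simp [assigned, hν₀i]
      · simp [assigned, hν₀j j hj, hj]
    have hassign_ne : ∀ s'', s'' ≠ s → assigned ν₀ s'' = assigned ρ s'' := by
      intro s'' h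
      ext j
      by_cases hj : j = i
      · subst hj
        simp only [assigned, Finset.mem_filter, Finset.mem_univ, true_and, hν₀i, hρi]
        constructor
        · intro he; exact absurd (Option.some.inj he).symm h
        · intro he; cases he
      · simp [assigned, hν₀j j hj]
    have hν₀feas : Feasible E ν₀ := by
      intro s''
      by_cases h : s'' = s
      · subst h
        rw [hassign_s, Finset.card_insert_of_notMem hiassigned]
        omega
      · rw [hassign_ne s'' h]
        exact hρstable.1 s''
    have hν₀stable : Stable E (Function.update (RP E t Qb kp) i q') ν₀ := by
      refine ⟨hν₀feas, ?_, ?_⟩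
      · intro j
        by_cases hj : j = i
        · subst hj
          rw [Function.update_self, hν₀i]
          exact le_of_lt hq's
        · rw [Function.update_of_ne hj, hν₀j j hj]
          exact hρstable.2.1 j
      · rintro j s'' ⟨hblt, hbor⟩
        by_cases hj : j = i
        · subst hj
          rw [Function.update_self, hν₀i] at hblt
          by_cases h : s'' = s
          · subst h; exact absurd hblt (lt_irrefl _)
          · have := hq'top s'' h; omega
        · rw [Function.update_of_ne hj] at hblt
          rw [hν₀j j hj] at hblt
          by_cases h : s'' = s
          · exact hρstable.2.2 j s'' ⟨hblt, Or.inl (by rw [h]; exact hempty2)⟩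
          · apply hρstable.2.2 j s''
            refine ⟨hblt, ?_⟩
            rcases hbor with hcard | ⟨l, hl, hh⟩
            · rw [hassign_ne s'' h] at hcard
              exact Or.inl hcard
            · right
              refine ⟨l, ?_, hh⟩
              have hlne : l ≠ i := by
                intro he; subst he
                rw [hν₀i] at hl
                exact h (Option.some.inj hl).symm
              rw [← hν₀j l hlne]
              exact hl
    have hstab' : Stable E (RP E t Q' kp) ν₀ := by
      rw [hP'']; exact hν₀stable
    have hopt := (DA_SO E (RP E t Q' kp)).2 ν₀ hstab' i
    have hRPi : RP E t Q' kp i = q' := by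
      rw [RP_none E t Q' (hiQ' kp le_rfl), hQ'i]
    rw [hRPi, hν₀i] at hopt
    have hDAi : DA E (RP E t Q' kp) i = some s := by
      cases hD : DA E (RP E t Q' kp) i with
      | none => rw [hD] at hopt; omega
      | some s'' =>
        rw [hD] at hopt
        by_cases h : s'' = s
        · rw [h]
        · have := hq'top s'' h; omega
    have hfinal : TDA E t Q' i = some s := by
      have h1 : TDAaux E t Q' (kp + 1) i = some s := by
        rw [TDAaux_succ_none E t Q' (hiQ' kp le_rfl)]
        exact hDAi
      exact TDAaux_persist E t Q' (by omega : kp + 1 ≤ Finset.univ.sup t) h1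
    have hNash := hNE i ps
    rw [hfinal] at hNash
    omega

end SchoolChoice
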